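/- For the sharpness example u(x,y) = y·w(r) with w(r) = |ln r|^{1/4} and r = √(x²+y²) on B_{1/2}⁺ ⊂ ℝ², the Laplacian f := Δu = (w''(r) + (3/r)·w'(r))·y satisfies f ∈ L²(B_{1/2}): there exists A₀ > 0 with (w'(r))² ≤ A₀/(r²|ln r|^{3/2}) and (w''(r))² ≤ A₀/(r⁴|ln r|^{3/2}) + A₀/(r⁴|ln r|^{7/2}) for r ∈ (0,1/2), and consequently ∫_{B_{1/2}} |f|² dx dy < ∞ (using polar coordinates and the substitution s = ln r). -/

import Mathlib

/-
For `0 < r < 1` put `L = -log r > 0`. Then `w = L^{1/4}`, `w' = -r⁻¹ L^{-3/4} / 4` and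
`w'' = r⁻² (L^{-3/4} / 4 - 3 L^{-7/4} / 16)`, so
`w'' + 3 w' / r = -r⁻² (L^{-3/4} / 2 + 3 L^{-7/4} / 16)`, and the pointwise bounds follow from
`(α a + β b)² ≤ a² + b²` for `α², β² ≤ 1/2`. In polar coordinates the integrand times the
Jacobian `r` is at most `r³ (w'' + 3 w' / r)² ≤ r⁻¹ (L^{-3/2} + L^{-7/2})`, and `r⁻¹ L^{-s}`
with `s > 1` is integrable near `0`: it is the derivative of `L^{1-s} / (s - 1)`, which tends
to `0` as `r → 0⁺`.
-/

open MeasureTheory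

/-- `w(r) = |ln r|^{1/4} = (−ln r)^{1/4}` for `0 < r < 1/2`. -/
noncomputable def w15 (r : ℝ) : ℝ := (-Real.log r) ^ ((1:ℝ) / 4)

open Real Set Filter Topology

lemma sq_rpow_eq_inv_rpow {L p q : ℝ} (hL : 0 ≤ L) (hpq : q = -(2 * p)) :
    (L ^ p) ^ 2 = (L ^ q)⁻¹ := by
  rw [← rpow_mul_natCast hL, ← rpow_neg hL, hpq]
  norm_num [mul_comm]

lemma sq_add_le_of_sq_le_half {α β a b : ℝ} (hα : α ^ 2 ≤ 1 / 2) (hβ : β ^ 2 ≤ 1 / 2) :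
    (α * a + β * b) ^ 2 ≤ a ^ 2 + b ^ 2 := by
  nlinarith [sq_nonneg (α * a - β * b), mul_le_mul_of_nonneg_right hα (sq_nonneg a),
    mul_le_mul_of_nonneg_right hβ (sq_nonneg b)]

lemma neg_log_pos {r : ℝ} (h0 : 0 < r) (h1 : r < 1) : 0 < -log r :=
  neg_pos.mpr (log_neg h0 h1)

lemma hasDerivAt_neg_log_rpow {r : ℝ} (h0 : 0 < r) (h1 : r < 1) (p : ℝ) :
    HasDerivAt (fun x => (-log x) ^ p) (-p * r⁻¹ * (-log r) ^ (p - 1)) r := by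
  refine ((hasDerivAt_rpow_const (p := p) (Or.inl (neg_log_pos h0 h1).ne')).comp r
    (hasDerivAt_log h0.ne').neg).congr_deriv ?_
  ring

lemma deriv_w15 {r : ℝ} (h0 : 0 < r) (h1 : r < 1) :
    deriv w15 r = -(1 / 4) * r⁻¹ * (-log r) ^ (-3 / 4 : ℝ) := by
  have h : HasDerivAt w15 _ r := hasDerivAt_neg_log_rpow h0 h1 (1 / 4)
  rw [h.deriv]
  norm_num

lemma deriv_deriv_w15 {r : ℝ} (h0 : 0 < r) (h1 : r < 1) :
    deriv (deriv w15) r =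
      (r ^ 2)⁻¹ * (1 / 4 * (-log r) ^ (-3 / 4 : ℝ) + -(3 / 16) * (-log r) ^ (-7 / 4 : ℝ)) := by
  have hloc : deriv w15 =ᶠ[𝓝 r] fun x => -(1 / 4) * x⁻¹ * (-log x) ^ (-3 / 4 : ℝ) :=
    eventually_of_mem (Ioo_mem_nhds h0 h1) fun x hx => deriv_w15 hx.1 hx.2
  rw [hloc.deriv_eq]
  refine (((hasDerivAt_inv h0.ne').const_mul _).mul
    (hasDerivAt_neg_log_rpow h0 h1 _)).deriv.trans ?_
  norm_num
  field_simp
  ring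

lemma sq_inv_sq_mul_rpow_le {r L α β : ℝ} (hL : 0 ≤ L) (hα : α ^ 2 ≤ 1 / 2)
    (hβ : β ^ 2 ≤ 1 / 2) :
    ((r ^ 2)⁻¹ * (α * L ^ (-3 / 4 : ℝ) + β * L ^ (-7 / 4 : ℝ))) ^ 2 ≤
      (r ^ 4)⁻¹ * ((L ^ (3 / 2 : ℝ))⁻¹ + (L ^ (7 / 2 : ℝ))⁻¹) := by
  rw [mul_pow, show ((r ^ 2)⁻¹) ^ 2 = (r ^ 4)⁻¹ by ring,
    ← sq_rpow_eq_inv_rpow hL (by norm_num : (3 / 2 : ℝ) = -(2 * (-3 / 4))),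
    ← sq_rpow_eq_inv_rpow hL (by norm_num : (7 / 2 : ℝ) = -(2 * (-7 / 4)))]
  exact mul_le_mul_of_nonneg_left (sq_add_le_of_sq_le_half hα hβ) (by positivity)

lemma sq_deriv_w15_le {r : ℝ} (h0 : 0 < r) (h1 : r < 1) :
    (deriv w15 r) ^ 2 ≤ 1 / (r ^ 2 * |log r| ^ (3 / 2 : ℝ)) := by
  have hL := neg_log_pos h0 h1
  rw [deriv_w15 h0 h1, abs_of_neg (log_neg h0 h1), mul_pow, mul_pow,
    sq_rpow_eq_inv_rpow hL.le (by norm_num : (3 / 2 : ℝ) = -(2 * (-3 / 4)))]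
  simp only [one_div, mul_inv, inv_pow]
  have : 0 ≤ (r ^ 2)⁻¹ * ((-log r) ^ (3 / 2 : ℝ))⁻¹ := by positivity
  nlinarith

lemma sq_deriv_deriv_w15_le {r : ℝ} (h0 : 0 < r) (h1 : r < 1) :
    (deriv (deriv w15) r) ^ 2 ≤
      1 / (r ^ 4 * |log r| ^ (3 / 2 : ℝ)) + 1 / (r ^ 4 * |log r| ^ (7 / 2 : ℝ)) := by
  rw [deriv_deriv_w15 h0 h1, abs_of_neg (log_neg h0 h1)]
  simp only [one_div (r ^ 4 * _), mul_inv, ← mul_add]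
  exact sq_inv_sq_mul_rpow_le (neg_log_pos h0 h1).le (by norm_num) (by norm_num)

/-- `Δ (y * w (√(x² + y²))) = y * laplacianCoeff w (√(x² + y²))` away from the origin. -/
noncomputable def laplacianCoeff (w : ℝ → ℝ) (r : ℝ) : ℝ := deriv (deriv w) r + 3 / r * deriv w r

@[fun_prop]
lemma measurable_laplacianCoeff (w : ℝ → ℝ) : Measurable (laplacianCoeff w) := by
  unfold laplacianCoeff
  fun_prop

lemma laplacianCoeff_w15 {r : ℝ} (h0 : 0 < r) (h1 : r < 1) :
    laplacianCoeff w15 r =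
      (r ^ 2)⁻¹ * (-(1 / 2) * (-log r) ^ (-3 / 4 : ℝ) + -(3 / 16) * (-log r) ^ (-7 / 4 : ℝ)) := by
  rw [laplacianCoeff, deriv_deriv_w15 h0 h1, deriv_w15 h0 h1]
  field_simp
  ring

lemma polar_sq_laplacianCoeff_w15_le {r θ : ℝ} (h0 : 0 < r) (h1 : r < 1) :
    r * (laplacianCoeff w15 r * (r * sin θ)) ^ 2 ≤
      (r * (-log r) ^ (3 / 2 : ℝ))⁻¹ + (r * (-log r) ^ (7 / 2 : ℝ))⁻¹ := by
  have hc := sq_inv_sq_mul_rpow_le (r := r) (neg_log_pos h0 h1).le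
    (α := -(1 / 2)) (β := -(3 / 16)) (by norm_num) (by norm_num)
  rw [← laplacianCoeff_w15 h0 h1] at hc
  calc r * (laplacianCoeff w15 r * (r * sin θ)) ^ 2
      ≤ r ^ 3 * laplacianCoeff w15 r ^ 2 := by
        have hsin := sin_sq_le_one θ
        have hnonneg : 0 ≤ r ^ 3 * laplacianCoeff w15 r ^ 2 := by positivity
        nlinarith
    _ ≤ r ^ 3 * ((r ^ 4)⁻¹ * (((-log r) ^ (3 / 2 : ℝ))⁻¹ + ((-log r) ^ (7 / 2 : ℝ))⁻¹)) :=
        mul_le_mul_of_nonneg_left hc (by positivity)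
    _ = _ := by field_simp

lemma tendsto_neg_log_rpow_nhdsGT_zero {p : ℝ} (hp : p < 0) :
    Tendsto (fun x => (-log x) ^ p) (𝓝[>] 0) (𝓝 0) := by
  have h := tendsto_rpow_neg_atTop (neg_pos.mpr hp)
  rw [neg_neg] at h
  exact h.comp (tendsto_neg_atBot_atTop.comp tendsto_log_nhdsGT_zero)

lemma integrableOn_inv_mul_neg_log_rpow {s c : ℝ} (hs : 1 < s) (hc : c < 1) :
    IntegrableOn (fun r => (r * (-log r) ^ s)⁻¹) (Ioc 0 c) := by
  have hs' : 1 - s < 0 := by linarith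
  refine intervalIntegral.integrableOn_deriv_of_nonneg
    (g := fun r => (s - 1)⁻¹ * (-log r) ^ (1 - s)) ?_ (fun x hx => ?_) (fun x hx => ?_)
  · intro x hx
    rcases hx.1.eq_or_lt with rfl | hx0
    · refine ContinuousWithinAt.mono ?_ Icc_subset_Ici_self
      rw [← continuousWithinAt_Ioi_iff_Ici, ContinuousWithinAt]
      simpa [zero_rpow hs'.ne] using (tendsto_neg_log_rpow_nhdsGT_zero hs').const_mul (s - 1)⁻¹
    · exact ((hasDerivAt_neg_log_rpow hx0 (hx.2.trans_lt hc) _).const_mul _).continuousAt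
        |>.continuousWithinAt
  · have hL := neg_log_pos hx.1 (hx.2.trans hc)
    refine ((hasDerivAt_neg_log_rpow hx.1 (hx.2.trans hc) _).const_mul _).congr_deriv ?_
    rw [sub_sub_cancel_left, rpow_neg hL.le]
    have : s - 1 ≠ 0 := by linarith
    field_simp
    ring
  · exact inv_nonneg.mpr
      (mul_nonneg hx.1.le (rpow_nonneg (neg_log_pos hx.1 (hx.2.trans hc)).le _))

lemma mem_polarCoord_symm_image {R : ℝ} (hR : 0 ≤ R) {p : ℝ × ℝ} (hp : p ∈ polarCoord.source)
    (hpR : p.1 ^ 2 + p.2 ^ 2 < R ^ 2) : p ∈ polarCoord.symm '' (Ioo 0 R ×ˢ Ioo (-π) π) := by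
  refine ⟨polarCoord p, ?_, polarCoord.left_inv hp⟩
  obtain ⟨hr, hθ⟩ := polarCoord.map_source hp
  exact ⟨⟨hr, sqrt_sq hR ▸ sqrt_lt_sqrt (by positivity) hpR⟩, hθ⟩

theorem integrableOn_disc_of_polarCoord_symm {E : Type*} [NormedAddCommGroup E] [NormedSpace ℝ E]
    {F : ℝ × ℝ → E} {R : ℝ} (hR : 0 ≤ R)
    (h : IntegrableOn (fun q : ℝ × ℝ => q.1 • F (polarCoord.symm q)) (Ioo 0 R ×ˢ Ioo (-π) π)) :
    IntegrableOn F {p : ℝ × ℝ | p.1 ^ 2 + p.2 ^ 2 < R ^ 2} := by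
  set S := Ioo 0 R ×ˢ Ioo (-π) π
  have hS : S ⊆ polarCoord.target := prod_mono Ioo_subset_Ioi_self subset_rfl
  have himage : IntegrableOn F (polarCoord.symm '' S) := by
    rw [integrableOn_image_iff_integrableOn_abs_det_fderiv_smul volume
      (measurableSet_Ioo.prod measurableSet_Ioo)
      (fun q _ => (hasFDerivAt_polarCoord_symm q).hasFDerivWithinAt)
      (polarCoord.symm.injOn.mono hS)]
    refine h.congr_fun (fun q hq => ?_) (measurableSet_Ioo.prod measurableSet_Ioo)
    rw [det_fderivPolarCoordSymm, abs_of_pos hq.1.1]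
  set D := {p : ℝ × ℝ | p.1 ^ 2 + p.2 ^ 2 < R ^ 2}
  have hD : IntegrableOn F (D ∩ polarCoord.source) :=
    himage.mono_set fun p hp => mem_polarCoord_symm_image hR hp.2 hp.1
  exact hD.congr_set_ae (by simpa using (ae_eq_refl D).inter polarCoord_source_ae_eq_univ.symm)

theorem integrableOn_polar_sq_laplacianCoeff_w15 {R : ℝ} (hR : R < 1) :
    IntegrableOn
      (fun q : ℝ × ℝ => q.1 • (laplacianCoeff w15 (√((polarCoord.symm q).1 ^ 2 +
        (polarCoord.symm q).2 ^ 2)) * (polarCoord.symm q).2) ^ 2) (Ioo 0 R ×ˢ Ioo (-π) π) := by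
  have hG : IntegrableOn
      (fun r => (r * (-log r) ^ (3 / 2 : ℝ))⁻¹ + (r * (-log r) ^ (7 / 2 : ℝ))⁻¹) (Ioo 0 R) :=
    ((integrableOn_inv_mul_neg_log_rpow (by norm_num) hR).add
      (integrableOn_inv_mul_neg_log_rpow (by norm_num) hR)).mono_set Ioo_subset_Ioc_self
  rw [IntegrableOn, Measure.volume_eq_prod, ← Measure.prod_restrict]
  refine (hG.comp_fst _).mono' (Measurable.aestronglyMeasurable (by fun_prop)) ?_
  rw [Measure.prod_restrict, ← Measure.volume_eq_prod]
  filter_upwards [ae_restrict_mem (measurableSet_Ioo.prod measurableSet_Ioo)] with q hq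
  obtain ⟨r, θ⟩ := q
  have h0 : 0 < r := hq.1.1
  have hsqrt : √((r * cos θ) ^ 2 + (r * sin θ) ^ 2) = r := by
    rw [mul_pow, mul_pow, ← mul_add, cos_sq_add_sin_sq, mul_one, sqrt_sq h0.le]
  simp only [polarCoord_symm_apply, hsqrt, smul_eq_mul, norm_eq_abs]
  rw [abs_of_nonneg (by positivity)]
  exact polar_sq_laplacianCoeff_w15_le h0 (hq.1.2.trans hR)

theorem stmt15 :
    ∃ A₀ : ℝ, 0 < A₀ ∧
      (∀ r : ℝ, 0 < r → r < 1 / 2 →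
        (deriv w15 r) ^ 2 ≤ A₀ / (r ^ 2 * |Real.log r| ^ ((3:ℝ) / 2)) ∧
        (deriv (deriv w15) r) ^ 2 ≤
          A₀ / (r ^ 4 * |Real.log r| ^ ((3:ℝ) / 2)) +
            A₀ / (r ^ 4 * |Real.log r| ^ ((7:ℝ) / 2))) ∧
      IntegrableOn
        (fun p : ℝ × ℝ =>
          ((deriv (deriv w15) (Real.sqrt (p.1 ^ 2 + p.2 ^ 2)) +
              3 / Real.sqrt (p.1 ^ 2 + p.2 ^ 2) *
                deriv w15 (Real.sqrt (p.1 ^ 2 + p.2 ^ 2))) * p.2) ^ 2)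
        {p : ℝ × ℝ | p.1 ^ 2 + p.2 ^ 2 < 1 / 4} volume := by
  refine ⟨1, one_pos, fun r h0 h1 => ?_, ?_⟩
  · exact ⟨sq_deriv_w15_le h0 (by linarith), sq_deriv_deriv_w15_le h0 (by linarith)⟩
  · rw [show (1 / 4 : ℝ) = (1 / 2) ^ 2 by norm_num]
    exact integrableOn_disc_of_polarCoord_symm (by norm_num)
      (integrableOn_polar_sq_laplacianCoeff_w15 (by norm_num))
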